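/- Fix an integer N ≥ 4 and define t_k := 1 − 4·(5/2)^{N−2}·(2/5)^{k−1} + 3·5^{N−2}·(1/5)^{k−1} for k ≥ 1. Then t_{N−1} = 0 and t_N = 0, while t_k > 0 for every k with 1 ≤ k ≤ N−2 and for every k ≥ N+1. In particular the impulse response of H^N is nonnegative and its last zero occurs at index k₀ = N. -/

import Mathlib

/-!
Put `j = N - 1 - k ∈ ℤ`. Since `2/5 = (5/2)⁻¹` and `1/5 = 5⁻¹`, the exponents `N - 2` and
`k - 1` merge and `t_k = 1 - 4 (5/2)^j + 3 · 5^j`, a function of `j` alone with zeros at `j = 0`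
and `j = -1`. For `j ≥ 1` the term `3 · 5^j ≥ 6 (5/2)^j` dominates `4 (5/2)^j`; for `j ≤ -2`
one has `4 (2/5)^{-j} ≤ 16/25 < 1`.
-/

noncomputable def shiftedResponse (j : ℤ) : ℝ := 1 - 4 * (5 / 2 : ℝ) ^ j + 3 * (5 : ℝ) ^ j

lemma shiftedResponse_zero : shiftedResponse 0 = 0 := by
  norm_num [shiftedResponse]

lemma shiftedResponse_neg_one : shiftedResponse (-1) = 0 := by
  norm_num [shiftedResponse]

lemma shiftedResponse_natCast_pos {n : ℕ} (hn : 1 ≤ n) : 0 < shiftedResponse n := by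
  have h5 : (5 : ℝ) ^ n = (5 / 2 : ℝ) ^ n * 2 ^ n := by rw [← mul_pow]; norm_num
  have h2 : (2 : ℝ) ≤ 2 ^ n := le_self_pow₀ (by norm_num) (by omega)
  have hpos : (0 : ℝ) < (5 / 2) ^ n := by positivity
  simp only [shiftedResponse, zpow_natCast, h5]
  nlinarith

lemma shiftedResponse_neg_natCast_pos {n : ℕ} (hn : 2 ≤ n) : 0 < shiftedResponse (-n) := by
  have hsmall : (2 / 5 : ℝ) ^ n ≤ (2 / 5) ^ 2 := pow_le_pow_of_le_one (by norm_num) (by norm_num) hn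
  have hpos : (0 : ℝ) < 5⁻¹ ^ n := by positivity
  simp only [shiftedResponse, zpow_neg, zpow_natCast, ← inv_pow, inv_div]
  nlinarith

lemma impulseResponse_eq_shiftedResponse {N k : ℕ} (hN : 2 ≤ N) (hk : 1 ≤ k) :
    1 - 4 * (5 / 2 : ℝ) ^ (N - 2) * (2 / 5 : ℝ) ^ (k - 1)
      + 3 * (5 : ℝ) ^ (N - 2) * (1 / 5 : ℝ) ^ (k - 1) = shiftedResponse ((N : ℤ) - 1 - k) := by
  have hj : (N : ℤ) - 1 - k = ((N - 2 : ℕ) : ℤ) - ((k - 1 : ℕ) : ℤ) := by omega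
  rw [shiftedResponse, hj, zpow_natCast_sub_natCast₀ (by norm_num),
    zpow_natCast_sub_natCast₀ (by norm_num), show (2 / 5 : ℝ) = (5 / 2)⁻¹ by norm_num, one_div,
    inv_pow, inv_pow]
  ring

theorem impulse_response_HN_signs
    (N : ℕ) (hN : 4 ≤ N) (t : ℕ → ℝ)
    (ht : ∀ k : ℕ, 1 ≤ k →
      t k = 1 - 4 * (5 / 2 : ℝ) ^ (N - 2) * (2 / 5 : ℝ) ^ (k - 1)
              + 3 * (5 : ℝ) ^ (N - 2) * (1 / 5 : ℝ) ^ (k - 1)) :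
    t (N - 1) = 0 ∧ t N = 0 ∧
      (∀ k : ℕ, 1 ≤ k → k ≤ N - 2 → 0 < t k) ∧
      (∀ k : ℕ, N + 1 ≤ k → 0 < t k) := by
  have ht' : ∀ k, 1 ≤ k → t k = shiftedResponse ((N : ℤ) - 1 - k) := fun k hk ↦
    (ht k hk).trans (impulseResponse_eq_shiftedResponse (by omega) hk)
  refine ⟨?_, ?_, fun k hk₁ hk₂ ↦ ?_, fun k hk ↦ ?_⟩
  · rw [ht' _ (by omega), show (N : ℤ) - 1 - (N - 1 : ℕ) = 0 by omega, shiftedResponse_zero]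
  · rw [ht' _ (by omega), show (N : ℤ) - 1 - N = -1 by omega, shiftedResponse_neg_one]
  · rw [ht' k hk₁, show (N : ℤ) - 1 - k = (N - 1 - k : ℕ) by omega]
    exact shiftedResponse_natCast_pos (by omega)
  · rw [ht' k (by omega), show (N : ℤ) - 1 - k = -(k + 1 - N : ℕ) by omega]
    exact shiftedResponse_neg_natCast_pos (by omega)
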